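/- arXiv:2204.02798 — 5 statements merged into one kernel-verified Lean document; each statement's English description precedes it below -/
import Mathlib

section
/- The function f*(θ) = (2·log 2 − (cos θ + 1)·log(cos θ + 1))/sin θ satisfies the flattening differential equation sin²θ·f''(θ) + sin θ·cos θ·f'(θ) − f(θ) = sin θ·cos θ − sin θ for all θ ∈ (0, π/2); moreover f*(θ) tends to 0 as θ → 0⁺, the derivative f*'(π/2) = 1, and f*(π/2) = 2·log 2. -/
open Real Set Filter

/-- The explicit solution `f*` of the flattening differential equation. -/
noncomputable def fStar (θ : ℝ) : ℝ :=
  (2 * Real.log 2 - (Real.cos θ + 1) * Real.log (Real.cos θ + 1)) / Real.sin θ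

noncomputable def Gg (θ : ℝ) : ℝ :=
  2 * Real.log 2 - (Real.cos θ + 1) * Real.log (Real.cos θ + 1)

lemma hasDerivAt_Gg (θ : ℝ) (h2 : 0 < Real.cos θ + 1) :
    HasDerivAt Gg (Real.sin θ * (Real.log (Real.cos θ + 1) + 1)) θ := by
  have hu : HasDerivAt (fun θ => Real.cos θ + 1) (-Real.sin θ) θ :=
    (Real.hasDerivAt_cos θ).add_const 1
  have hlog : HasDerivAt (fun θ => Real.log (Real.cos θ + 1))
      (-Real.sin θ / (Real.cos θ + 1)) θ := hu.log h2.ne'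
  have h := ((hu.mul hlog).const_sub (2 * Real.log 2))
  exact h.congr_deriv (by field_simp; ring)

noncomputable def F1 (θ : ℝ) : ℝ :=
  Real.log (Real.cos θ + 1) + 1 - Gg θ * Real.cos θ / Real.sin θ ^ 2

lemma fStar_eq (θ : ℝ) : fStar θ = Gg θ / Real.sin θ := rfl

lemma hasDerivAt_fStar (θ : ℝ) (h1 : Real.sin θ ≠ 0) (h2 : 0 < Real.cos θ + 1) :
    HasDerivAt fStar (F1 θ) θ := by
  have h := (hasDerivAt_Gg θ h2).div (Real.hasDerivAt_sin θ) h1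
  have : fStar = fun θ => Gg θ / Real.sin θ := rfl
  rw [this]
  exact h.congr_deriv (by unfold F1; field_simp)

noncomputable def F2 (θ : ℝ) : ℝ :=
  -Real.sin θ / (Real.cos θ + 1) -
    ((Real.sin θ * (Real.log (Real.cos θ + 1) + 1) * Real.cos θ
        + Gg θ * (-Real.sin θ)) * Real.sin θ ^ 2
      - Gg θ * Real.cos θ * (2 * Real.sin θ ^ 1 * Real.cos θ)) / (Real.sin θ ^ 2) ^ 2

lemma hasDerivAt_F1 (θ : ℝ) (h1 : Real.sin θ ≠ 0) (h2 : 0 < Real.cos θ + 1) :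
    HasDerivAt F1 (F2 θ) θ := by
  have hu : HasDerivAt (fun θ => Real.cos θ + 1) (-Real.sin θ) θ :=
    (Real.hasDerivAt_cos θ).add_const 1
  have hlog : HasDerivAt (fun θ => Real.log (Real.cos θ + 1))
      (-Real.sin θ / (Real.cos θ + 1)) θ := hu.log h2.ne'
  have hs2 : HasDerivAt (fun θ => Real.sin θ ^ 2)
      (2 * Real.sin θ ^ 1 * Real.cos θ) θ := by
    simpa using (Real.hasDerivAt_sin θ).fun_pow 2
  have hnum : HasDerivAt (fun θ => Gg θ * Real.cos θ)
      (Real.sin θ * (Real.log (Real.cos θ + 1) + 1) * Real.cos θ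
        + Gg θ * (-Real.sin θ)) θ :=
    (hasDerivAt_Gg θ h2).mul (Real.hasDerivAt_cos θ)
  have h := ((hlog.add_const 1).sub (hnum.div hs2 (pow_ne_zero 2 h1)))
  exact h

lemma cos_add_one_pos (θ : ℝ) (h1 : Real.sin θ ≠ 0) : 0 < Real.cos θ + 1 := by
  have h := Real.neg_one_le_cos θ
  rcases lt_or_eq_of_le h with h' | h'
  · linarith
  · exfalso
    have := Real.sin_sq_add_cos_sq θ
    have : Real.sin θ ^ 2 = 0 := by nlinarith
    exact h1 (by nlinarith [sq_nonneg (Real.sin θ)])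

lemma deriv_fStar_eq (θ : ℝ) (h1 : Real.sin θ ≠ 0) :
    deriv fStar θ = F1 θ :=
  (hasDerivAt_fStar θ h1 (cos_add_one_pos θ h1)).deriv

lemma test_ode (θ : ℝ) (hθ : θ ∈ Set.Ioo (0:ℝ) (Real.pi/2)) :
    Real.sin θ ^ 2 * deriv (deriv fStar) θ
      + Real.sin θ * Real.cos θ * deriv fStar θ - fStar θ
      = Real.sin θ * Real.cos θ - Real.sin θ := by
  obtain ⟨h0, hp⟩ := hθ
  have hθπ : θ < Real.pi := hp.trans_le (by linarith [Real.pi_pos])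
  have hs : Real.sin θ ≠ 0 := (Real.sin_pos_of_pos_of_lt_pi h0 hθπ).ne'
  have hc : 0 < Real.cos θ + 1 := cos_add_one_pos θ hs
  have hev : deriv fStar =ᶠ[nhds θ] F1 := by
    filter_upwards [isOpen_Ioo.mem_nhds (show θ ∈ Set.Ioo 0 Real.pi from ⟨h0, hθπ⟩)]
      with x hx
    exact deriv_fStar_eq x (Real.sin_pos_of_pos_of_lt_pi hx.1 hx.2).ne'
  have h2 : deriv (deriv fStar) θ = F2 θ := by
    rw [hev.deriv_eq]
    exact (hasDerivAt_F1 θ hs hc).deriv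
  rw [h2, deriv_fStar_eq θ hs, fStar_eq]
  unfold F1 F2
  have hpy := Real.sin_sq_add_cos_sq θ
  field_simp
  linear_combination ((Real.cos θ + 1) * Gg θ - Real.sin θ ^ 2) * hpy

lemma tendsto_fStar_zero :
    Filter.Tendsto fStar (nhdsWithin 0 (Set.Ioi 0)) (nhds 0) := by
  have hG0 : HasDerivAt Gg 0 0 := by
    have := hasDerivAt_Gg 0 (by norm_num)
    simpa using this
  have hS0 : HasDerivAt Real.sin 1 0 := by simpa using Real.hasDerivAt_sin 0
  have hle : nhdsWithin (0:ℝ) (Set.Ioi 0) ≤ nhdsWithin 0 {0}ᶜ :=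
    nhdsWithin_mono 0 (fun x hx => ne_of_gt hx)
  have tG : Filter.Tendsto (slope Gg 0) (nhdsWithin 0 (Set.Ioi 0)) (nhds 0) :=
    (hasDerivAt_iff_tendsto_slope.mp hG0).mono_left hle
  have tS : Filter.Tendsto (slope Real.sin 0) (nhdsWithin 0 (Set.Ioi 0)) (nhds 1) :=
    (hasDerivAt_iff_tendsto_slope.mp hS0).mono_left hle
  have := tG.div tS one_ne_zero
  rw [zero_div] at this
  refine this.congr' ?_
  filter_upwards [self_mem_nhdsWithin] with x hx
  have hx0 : x ≠ 0 := ne_of_gt hx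
  have hGg0 : Gg 0 = 0 := by
    unfold Gg
    rw [Real.cos_zero]
    norm_num
  rw [Pi.div_apply, slope_def_field, slope_def_field, hGg0, Real.sin_zero, fStar_eq]
  rw [sub_zero, sub_zero, sub_zero]
  rcases eq_or_ne (Real.sin x) 0 with hb | hb
  · simp [hb]
  · field_simp

lemma deriv_fStar_pi_div_two : deriv fStar (Real.pi / 2) = 1 := by
  have hs : Real.sin (Real.pi / 2) ≠ 0 := by
    rw [Real.sin_pi_div_two]; norm_num
  rw [deriv_fStar_eq _ hs]
  unfold F1
  rw [Real.cos_pi_div_two, Real.sin_pi_div_two]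
  norm_num

lemma fStar_pi_div_two : fStar (Real.pi / 2) = 2 * Real.log 2 := by
  rw [fStar_eq]
  unfold Gg
  rw [Real.cos_pi_div_two, Real.sin_pi_div_two]
  norm_num

theorem fStar_solves_flattening_ode :
    (∀ θ ∈ Set.Ioo (0 : ℝ) (Real.pi / 2),
        Real.sin θ ^ 2 * deriv (deriv fStar) θ
          + Real.sin θ * Real.cos θ * deriv fStar θ - fStar θ
          = Real.sin θ * Real.cos θ - Real.sin θ) ∧
    Filter.Tendsto fStar (nhdsWithin 0 (Set.Ioi 0)) (nhds 0) ∧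
    deriv fStar (Real.pi / 2) = 1 ∧
    fStar (Real.pi / 2) = 2 * Real.log 2 := by
  exact ⟨test_ode, tendsto_fStar_zero, deriv_fStar_pi_div_two, fStar_pi_div_two⟩
end

section
/- Uniqueness of the bounded solution: if f : (0, π/2] → ℝ is twice differentiable, satisfies sin²θ·f''(θ) + sin θ·cos θ·f'(θ) − f(θ) = sin θ·cos θ − sin θ for all θ ∈ (0, π/2), has f(θ) → 0 as θ → 0⁺, and satisfies f'(π/2) = 1, then f(θ) = (2·log 2 − (cos θ + 1)·log(cos θ + 1))/sin θ for all θ ∈ (0, π/2]. -/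
open Real Set Filter

theorem flattening_ode_unique_bounded_solution (f : ℝ → ℝ)
    (hf : ∀ θ ∈ Set.Ioc (0 : ℝ) (Real.pi / 2), DifferentiableAt ℝ f θ)
    (hf' : ∀ θ ∈ Set.Ioc (0 : ℝ) (Real.pi / 2), DifferentiableAt ℝ (deriv f) θ)
    (hode : ∀ θ ∈ Set.Ioo (0 : ℝ) (Real.pi / 2),
      Real.sin θ ^ 2 * deriv (deriv f) θ
        + Real.sin θ * Real.cos θ * deriv f θ - f θ
        = Real.sin θ * Real.cos θ - Real.sin θ)
    (hlim : Filter.Tendsto f (nhdsWithin 0 (Set.Ioi 0)) (nhds 0))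
    (hbc : deriv f (Real.pi / 2) = 1) :
    ∀ θ ∈ Set.Ioc (0 : ℝ) (Real.pi / 2),
      f θ = (2 * Real.log 2 - (Real.cos θ + 1) * Real.log (Real.cos θ + 1)) / Real.sin θ := by
  have hpi2 : (0:ℝ) < Real.pi / 2 := by positivity
  have hpilt : Real.pi / 2 < Real.pi := by linarith [Real.pi_pos]
  have hu : ∀ θ ∈ Set.Icc (0:ℝ) (Real.pi/2), 0 < Real.cos θ + 1 := by
    intro θ hθ
    have : 0 ≤ Real.cos θ := Real.cos_nonneg_of_mem_Icc ⟨by linarith [hθ.1], hθ.2⟩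
    linarith
  have hs : ∀ θ ∈ Set.Ioc (0:ℝ) (Real.pi/2), 0 < Real.sin θ := fun θ hθ =>
    Real.sin_pos_of_pos_of_lt_pi hθ.1 (lt_of_le_of_lt hθ.2 hpilt)
  set N : ℝ → ℝ := fun x => 2 * Real.log 2 - (Real.cos x + 1) * Real.log (Real.cos x + 1) with hNdef
  set H : ℝ → ℝ := fun x => Real.cos x * f x + Real.sin x * deriv f x
      - Real.sin x * (Real.log (Real.cos x + 1) + 1) with hHdef
  -- derivative of log(cos x + 1)
  have hL : ∀ θ : ℝ, Real.cos θ + 1 ≠ 0 →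
      HasDerivAt (fun x => Real.log (Real.cos x + 1)) (-Real.sin θ / (Real.cos θ + 1)) θ := by
    intro θ h0
    have h1 : HasDerivAt (fun x => Real.cos x + 1) (-Real.sin θ) θ :=
      (Real.hasDerivAt_cos θ).add_const 1
    have h2 := (Real.hasDerivAt_log h0).comp θ h1
    refine h2.congr_deriv ?_
    field_simp
  -- derivative of N
  have hNderiv : ∀ θ : ℝ, Real.cos θ + 1 ≠ 0 →
      HasDerivAt N (Real.sin θ * (Real.log (Real.cos θ + 1) + 1)) θ := by
    intro θ h0
    have h1 : HasDerivAt (fun x => Real.cos x + 1) (-Real.sin θ) θ :=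
      (Real.hasDerivAt_cos θ).add_const 1
    have h3 := (h1.mul (hL θ h0)).const_sub (2 * Real.log 2)
    refine h3.congr_deriv ?_
    field_simp
    ring
  -- H has derivative and (H/sin)' = 0 on Ioo
  have hphi : ∀ θ ∈ Set.Ioo (0:ℝ) (Real.pi/2),
      HasDerivAt (fun x => H x / Real.sin x) 0 θ := by
    intro θ hθ
    have hθc : θ ∈ Set.Ioc (0:ℝ) (Real.pi/2) := ⟨hθ.1, hθ.2.le⟩
    have hsθ : Real.sin θ ≠ 0 := (hs θ hθc).ne'
    have huθ : Real.cos θ + 1 ≠ 0 := (hu θ ⟨hθ.1.le, hθ.2.le⟩).ne'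
    have d1 : HasDerivAt (fun x => Real.cos x * f x)
        (-Real.sin θ * f θ + Real.cos θ * deriv f θ) θ :=
      (Real.hasDerivAt_cos θ).mul (hf θ hθc).hasDerivAt
    have d2 : HasDerivAt (fun x => Real.sin x * deriv f x)
        (Real.cos θ * deriv f θ + Real.sin θ * deriv (deriv f) θ) θ :=
      (Real.hasDerivAt_sin θ).mul (hf' θ hθc).hasDerivAt
    have d3 : HasDerivAt (fun x => Real.sin x * (Real.log (Real.cos x + 1) + 1))
        (Real.cos θ * (Real.log (Real.cos θ + 1) + 1)
          + Real.sin θ * (-Real.sin θ / (Real.cos θ + 1))) θ :=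
      (Real.hasDerivAt_sin θ).mul ((hL θ huθ).add_const 1)
    have dH : HasDerivAt H
        ((-Real.sin θ * f θ + Real.cos θ * deriv f θ)
          + (Real.cos θ * deriv f θ + Real.sin θ * deriv (deriv f) θ)
          - (Real.cos θ * (Real.log (Real.cos θ + 1) + 1)
              + Real.sin θ * (-Real.sin θ / (Real.cos θ + 1)))) θ :=
      (d1.add d2).sub d3
    have dφ := dH.div (Real.hasDerivAt_sin θ) hsθ
    refine dφ.congr_deriv ?_
    have hode' := hode θ hθ
    have hpy : Real.sin θ ^ 2 + Real.cos θ ^ 2 = 1 := Real.sin_sq_add_cos_sq θ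
    rw [hHdef]
    field_simp
    linear_combination (Real.cos θ + 1) * hode' + (Real.sin θ - (Real.cos θ + 1) * f θ) * hpy
  -- H/sin continuous on Ioc
  have hHcont : ∀ x ∈ Set.Ioc (0:ℝ) (Real.pi/2), ContinuousAt (fun y => H y / Real.sin y) x := by
    intro x hx
    have hsx : Real.sin x ≠ 0 := (hs x hx).ne'
    have hux : Real.cos x + 1 ≠ 0 := (hu x ⟨hx.1.le, hx.2⟩).ne'
    have c1 : ContinuousAt H x := by
      apply ContinuousAt.sub
      · exact (Real.continuous_cos.continuousAt.mul (hf x hx).continuousAt).add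
          (Real.continuous_sin.continuousAt.mul (hf' x hx).continuousAt)
      · exact Real.continuous_sin.continuousAt.mul ((hL x hux).continuousAt.add continuousAt_const)
    exact c1.div Real.continuous_sin.continuousAt hsx
  -- φ (π/2) = 0
  have hφpi : H (Real.pi/2) / Real.sin (Real.pi/2) = 0 := by
    rw [hHdef]
    simp [Real.cos_pi_div_two, Real.sin_pi_div_two, hbc]
  -- H = 0 on Ioc
  have hH0 : ∀ θ ∈ Set.Ioc (0:ℝ) (Real.pi/2), H θ = 0 := by
    intro θ hθ
    have key : H (Real.pi/2) / Real.sin (Real.pi/2) = H θ / Real.sin θ := by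
      apply constant_of_has_deriv_right_zero (f := fun x => H x / Real.sin x)
        (a := θ) (b := Real.pi/2)
      · intro x hx
        exact (hHcont x ⟨lt_of_lt_of_le hθ.1 hx.1, hx.2⟩).continuousWithinAt
      · intro x hx
        exact (hphi x ⟨lt_of_lt_of_le hθ.1 hx.1, hx.2⟩).hasDerivWithinAt
      · exact ⟨hθ.2, le_refl _⟩
    have : H θ / Real.sin θ = 0 := by rw [← key, hφpi]
    have hsθ := (hs θ hθ).ne'
    field_simp at this
    simpa using this
  -- h := sin*f - N has derivative H = 0 on Ioc
  have hhderiv : ∀ θ ∈ Set.Ioc (0:ℝ) (Real.pi/2),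
      HasDerivAt (fun x => Real.sin x * f x - N x) 0 θ := by
    intro θ hθ
    have huθ : Real.cos θ + 1 ≠ 0 := (hu θ ⟨hθ.1.le, hθ.2⟩).ne'
    have d1 : HasDerivAt (fun x => Real.sin x * f x)
        (Real.cos θ * f θ + Real.sin θ * deriv f θ) θ :=
      (Real.hasDerivAt_sin θ).mul (hf θ hθ).hasDerivAt
    have dh := d1.sub (hNderiv θ huθ)
    have : Real.cos θ * f θ + Real.sin θ * deriv f θ
        - Real.sin θ * (Real.log (Real.cos θ + 1) + 1) = H θ := rfl
    rw [this, hH0 θ hθ] at dh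
    exact dh
  -- h constant on Ioc, equal to h(π/2)
  have hconst : ∀ θ ∈ Set.Ioc (0:ℝ) (Real.pi/2),
      Real.sin θ * f θ - N θ = Real.sin (Real.pi/2) * f (Real.pi/2) - N (Real.pi/2) := by
    intro θ hθ
    have key := constant_of_has_deriv_right_zero (f := fun x => Real.sin x * f x - N x)
      (a := θ) (b := Real.pi/2)
      (fun x hx => ((hhderiv x ⟨lt_of_lt_of_le hθ.1 hx.1, hx.2⟩).differentiableAt.continuousAt).continuousWithinAt)
      (fun x hx => (hhderiv x ⟨lt_of_lt_of_le hθ.1 hx.1, hx.2.le⟩).hasDerivWithinAt)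
      (Real.pi/2) ⟨hθ.2, le_refl _⟩
    exact key.symm
  -- limit: h → 0 at 0⁺, so constant value is 0
  have hN0 : N 0 = 0 := by
    rw [hNdef]; norm_num
  have hNcont : ContinuousAt N 0 := by
    have : (0:ℝ) < Real.cos 0 + 1 := by norm_num
    exact (hNderiv 0 this.ne').differentiableAt.continuousAt
  have hlimh : Filter.Tendsto (fun x => Real.sin x * f x - N x)
      (nhdsWithin 0 (Set.Ioi 0)) (nhds 0) := by
    have t1 : Filter.Tendsto (fun x => Real.sin x * f x) (nhdsWithin 0 (Set.Ioi 0)) (nhds 0) := by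
      have := ((Real.continuous_sin.tendsto 0).mono_left nhdsWithin_le_nhds).mul hlim
      simpa using this
    have t2 : Filter.Tendsto N (nhdsWithin 0 (Set.Ioi 0)) (nhds 0) := by
      have := (hNcont.tendsto).mono_left (nhdsWithin_le_nhds (s := Set.Ioi (0:ℝ)))
      rwa [hN0] at this
    simpa using t1.sub t2
  have hev : (fun x => Real.sin x * f x - N x) =ᶠ[nhdsWithin 0 (Set.Ioi 0)]
      (fun _ => Real.sin (Real.pi/2) * f (Real.pi/2) - N (Real.pi/2)) := by
    filter_upwards [Ioo_mem_nhdsGT_of_mem (⟨le_refl _, hpi2⟩ : (0:ℝ) ∈ Set.Ico 0 (Real.pi/2))] with x hx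
    exact hconst x ⟨hx.1, hx.2.le⟩
  have hc0 : Real.sin (Real.pi/2) * f (Real.pi/2) - N (Real.pi/2) = 0 := by
    have := hlimh.congr' hev
    exact (tendsto_nhds_unique this tendsto_const_nhds).symm
  -- conclude
  intro θ hθ
  have h0 : Real.sin θ * f θ - N θ = 0 := by rw [hconst θ hθ, hc0]
  have hsθ : Real.sin θ ≠ 0 := (hs θ hθ).ne'
  have : f θ = N θ / Real.sin θ := by field_simp; linarith
  rw [this, hNdef]
end

section
/- The function β(x) = 2x/(1 + √(1 − x²)) satisfies the equation x²·(1 − x²)·β''(x) + x·(1 − 2x²)·β'(x) − β(x) = 0 for all x ∈ (−1, 1). -/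
open Real Set

lemma hasDerivAt_beta (x : ℝ) (hx : x ∈ Set.Ioo (-1:ℝ) 1) :
    HasDerivAt (fun y : ℝ => 2 * y / (1 + Real.sqrt (1 - y ^ 2)))
      (2 / (Real.sqrt (1 - x ^ 2) * (1 + Real.sqrt (1 - x ^ 2)))) x := by
  have h1 : 0 < 1 - x ^ 2 := by nlinarith [hx.1, hx.2]
  set s := Real.sqrt (1 - x ^ 2) with hsdef
  have hs : 0 < s := Real.sqrt_pos.2 h1
  have hs2 : s ^ 2 = 1 - x ^ 2 := Real.sq_sqrt h1.le
  have hinner : HasDerivAt (fun y : ℝ => 1 - y ^ 2) (-(2*x)) x := by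
    simpa using ((hasDerivAt_pow 2 x).const_sub 1)
  have hsq : HasDerivAt (fun y : ℝ => Real.sqrt (1 - y ^ 2)) (1/(2*s) * (-(2*x))) x :=
    (Real.hasDerivAt_sqrt h1.ne').comp x hinner
  have hden : HasDerivAt (fun y : ℝ => 1 + Real.sqrt (1 - y ^ 2)) (1/(2*s) * (-(2*x))) x :=
    hsq.const_add 1
  have hnum : HasDerivAt (fun y : ℝ => 2 * y) 2 x := by
    simpa using (hasDerivAt_id x).const_mul 2
  have hd0 : (1 + s) ≠ 0 := by positivity
  have h : HasDerivAt (fun y : ℝ => 2 * y / (1 + Real.sqrt (1 - y ^ 2))) _ x := hnum.div hden hd0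
  convert h using 1
  field_simp
  nlinarith [hs2, hs]

lemma hasDerivAt_beta' (x : ℝ) (hx : x ∈ Set.Ioo (-1:ℝ) 1) :
    HasDerivAt (fun y : ℝ => 2 / (Real.sqrt (1 - y ^ 2) * (1 + Real.sqrt (1 - y ^ 2))))
      (2 * x * (1 + 2 * Real.sqrt (1 - x ^ 2)) /
        (Real.sqrt (1 - x ^ 2) ^ 3 * (1 + Real.sqrt (1 - x ^ 2)) ^ 2)) x := by
  have h1 : 0 < 1 - x ^ 2 := by nlinarith [hx.1, hx.2]
  set s := Real.sqrt (1 - x ^ 2) with hsdef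
  have hs : 0 < s := Real.sqrt_pos.2 h1
  have hs2 : s ^ 2 = 1 - x ^ 2 := Real.sq_sqrt h1.le
  have hinner : HasDerivAt (fun y : ℝ => 1 - y ^ 2) (-(2*x)) x := by
    simpa using ((hasDerivAt_pow 2 x).const_sub 1)
  have hsq : HasDerivAt (fun y : ℝ => Real.sqrt (1 - y ^ 2)) (1/(2*s) * (-(2*x))) x :=
    (Real.hasDerivAt_sqrt h1.ne').comp x hinner
  have hden : HasDerivAt (fun y : ℝ => Real.sqrt (1 - y ^ 2) * (1 + Real.sqrt (1 - y ^ 2)))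
      (1/(2*s) * (-(2*x)) * (1 + s) + s * (1/(2*s) * (-(2*x)))) x :=
    hsq.mul (hsq.const_add 1)
  have hd0 : s * (1 + s) ≠ 0 := by positivity
  have h : HasDerivAt (fun y : ℝ => 2 / (Real.sqrt (1 - y ^ 2) * (1 + Real.sqrt (1 - y ^ 2)))) _ x :=
    (hasDerivAt_const x (2:ℝ)).div hden hd0
  convert h using 1
  field_simp
  nlinarith [hs2, hs]

theorem beta_explicit_solves_transformed :
    ∀ x ∈ Set.Ioo (-1 : ℝ) 1,
      x ^ 2 * (1 - x ^ 2) *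
          deriv (deriv (fun y : ℝ => 2 * y / (1 + Real.sqrt (1 - y ^ 2)))) x
        + x * (1 - 2 * x ^ 2) *
          deriv (fun y : ℝ => 2 * y / (1 + Real.sqrt (1 - y ^ 2))) x
        - 2 * x / (1 + Real.sqrt (1 - x ^ 2)) = 0 := by
  intro x hx
  have h1 : 0 < 1 - x ^ 2 := by nlinarith [hx.1, hx.2]
  have heq : deriv (fun y : ℝ => 2 * y / (1 + Real.sqrt (1 - y ^ 2)))
      =ᶠ[nhds x] fun y : ℝ => 2 / (Real.sqrt (1 - y ^ 2) * (1 + Real.sqrt (1 - y ^ 2))) := by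
    filter_upwards [isOpen_Ioo.mem_nhds hx] with y hy
    exact (hasDerivAt_beta y hy).deriv
  have hd2 : deriv (deriv (fun y : ℝ => 2 * y / (1 + Real.sqrt (1 - y ^ 2)))) x
      = 2 * x * (1 + 2 * Real.sqrt (1 - x ^ 2)) /
        (Real.sqrt (1 - x ^ 2) ^ 3 * (1 + Real.sqrt (1 - x ^ 2)) ^ 2) := by
    rw [heq.deriv_eq]
    exact (hasDerivAt_beta' x hx).deriv
  rw [hd2, (hasDerivAt_beta x hx).deriv]
  set s := Real.sqrt (1 - x ^ 2) with hsdef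
  have hs : 0 < s := Real.sqrt_pos.2 h1
  have hs2 : s ^ 2 = 1 - x ^ 2 := Real.sq_sqrt h1.le
  have hd0 : (1 + s) ≠ 0 := by positivity
  field_simp
  linear_combination (x*((-2-2*s+8*s^2+10*s^3+4*s^4)*x^2 + (2+2*s-12*s^2-10*s^3+8*s^4+12*s^5+4*s^6) + (-2-2*s+8*s^2+10*s^3+4*s^4)*(1-s^2)) + x*((-2*s-8*s^2-10*s^3-4*s^4)*x^2 + (2*s+8*s^2+6*s^3-8*s^4-12*s^5-4*s^6) + (-2*s-8*s^2-10*s^3-4*s^4)*(1-s^2))) * hs2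
end

section
/- Power-series recurrence: if β(x) = Σ_{n=0}^{∞} aₙ·xⁿ is a convergent power series on a neighborhood of 0 whose sum satisfies x²·(1 − x²)·β''(x) + x·(1 − 2x²)·β'(x) − β(x) = 0 on that neighborhood, then for every natural number n ≠ 1 one has (n + 1)·aₙ = (n − 2)·a_{n−2} (with the convention a_{−1} = a_{−2} = 0); in particular a₀ = 0 and aₙ = 0 for all even n. -/
open Real Set Filter FormalMultilinearSeries

private lemma psr_radius_ge (c : ℕ → ℝ) (R : ENNReal)
    (h : ∀ y : ℝ, y ∈ Metric.eball (0:ℝ) R → Summable fun n => c n * y ^ n) :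
    R ≤ (ofScalars ℝ c).radius := by
  refine ENNReal.le_of_forall_nnreal_lt fun t ht => ?_
  have hy : ((t:ℝ)) ∈ Metric.eball (0:ℝ) R := by
    rw [EMetric.mem_ball, edist_zero_right]
    simpa using ht
  have hs := (h t hy).tendsto_atTop_zero
  apply (ofScalars ℝ c).le_radius_of_tendsto (l := 0)
  have habs : Filter.Tendsto (fun n => |c n * (t:ℝ) ^ n|) atTop (nhds 0) := by
    simpa using hs.abs
  convert habs using 2 with n
  rw [ofScalars_norm, Real.norm_eq_abs, abs_mul, abs_pow]
  simp [NNReal.abs_eq]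

private lemma psr_hasSeries (c : ℕ → ℝ) (f : ℝ → ℝ) (R : ENNReal) (hR : 0 < R)
    (h : ∀ y : ℝ, y ∈ Metric.eball (0:ℝ) R → HasSum (fun n => c n * y ^ n) (f y)) :
    HasFPowerSeriesOnBall f (ofScalars ℝ c) 0 R := by
  refine ⟨psr_radius_ge c R (fun y hy => (h y hy).summable), hR, fun {y} hy => ?_⟩
  rw [zero_add]
  have e : (fun n => ofScalars ℝ c n fun _ => y) = fun n => c n * y ^ n :=
    funext fun n => by rw [ofScalars_apply_eq, smul_eq_mul]
  rw [e]
  exact h y (by simpa using hy)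

private lemma psr_hasSum_of (c : ℕ → ℝ) (f : ℝ → ℝ) (R : ENNReal)
    (h : HasFPowerSeriesOnBall f (ofScalars ℝ c) 0 R) (y : ℝ)
    (hy : y ∈ Metric.eball (0:ℝ) R) : HasSum (fun n => c n * y ^ n) (f y) := by
  have h2 := h.hasSum (y := y) (by simpa using hy)
  rw [zero_add] at h2
  have e : (fun n => ofScalars ℝ c n fun _ => y) = fun n => c n * y ^ n :=
    funext fun n => by rw [ofScalars_apply_eq, smul_eq_mul]
  rwa [e] at h2

set_option maxHeartbeats 1000000 in
private lemma psr_deriv_series (c : ℕ → ℝ) (f : ℝ → ℝ) (R : ENNReal)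
    (h : HasFPowerSeriesOnBall f (ofScalars ℝ c) 0 R) :
    HasFPowerSeriesOnBall (deriv f) (ofScalars ℝ (fun n => ((n:ℝ)+1) * c (n+1))) 0 R := by
  have hd := h.fderiv
  apply psr_hasSeries _ _ _ h.r_pos
  intro y hy
  rcases eq_or_ne y 0 with rfl | hy0
  · have hderiv : deriv f 0 = c 1 := by
      rw [h.hasFPowerSeriesAt.deriv, ofScalars_apply_eq]
      simp
    have h0 : HasSum (fun n : ℕ => (((n:ℝ)+1) * c (n+1)) * (0:ℝ) ^ n)
        ((((0:ℕ):ℝ)+1) * c (0+1) * (0:ℝ) ^ 0) :=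
      hasSum_single 0 (fun b hb => by simp [zero_pow hb])
    simpa [hderiv] using h0
  · have h1 : HasSum (fun n => (ofScalars ℝ c).derivSeries n (fun _ => y)) (fderiv ℝ f y) := by
      have := hd.hasSum (y := y) (by simpa using hy)
      rwa [zero_add] at this
    have h2 := (ContinuousLinearMap.apply ℝ ℝ (1:ℝ)).hasSum h1
    simp only [ContinuousLinearMap.apply_apply] at h2
    rw [fderiv_apply_one_eq_deriv] at h2
    have e : (fun n => ((ofScalars ℝ c).derivSeries n (fun _ => y)) 1)
        = fun n : ℕ => (((n:ℝ)+1) * c (n+1)) * y ^ n := by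
      funext n
      have key : ((ofScalars ℝ c).derivSeries n (fun _ => y)) y
          = (n+1) • ((ofScalars ℝ c) (n+1) (fun _ => y)) :=
        FormalMultilinearSeries.derivSeries_apply_diag _ n y
      have lin : ((ofScalars ℝ c).derivSeries n (fun _ => y)) y
          = y * ((ofScalars ℝ c).derivSeries n (fun _ => y)) 1 := by
        conv_lhs => rw [show y = y • (1:ℝ) by simp]
        rw [ContinuousLinearMap.map_smul]
        simp [smul_eq_mul]
      rw [ofScalars_apply_eq] at key
      have heq : y * ((ofScalars ℝ c).derivSeries n (fun _ => y)) 1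
          = (n+1) • (c (n+1) • y ^ (n+1)) := by rw [← lin, key]
      rw [nsmul_eq_mul, smul_eq_mul, pow_succ] at heq
      apply mul_left_cancel₀ hy0
      rw [heq]
      push_cast
      ring
    rwa [e] at h2

private lemma psr_shift (k : ℕ) (u : ℕ → ℝ) (y S : ℝ)
    (h : HasSum (fun n => u n * y ^ n) S) :
    HasSum (fun n => (if k ≤ n then u (n - k) else 0) * y ^ n) (y ^ k * S) := by
  have h2 : HasSum (fun n => (if k ≤ n + k then u (n + k - k) else 0) * y ^ (n + k))
      (y ^ k * S) := by
    have := h.mul_left (y ^ k)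
    convert this using 2 with n
    · rfl
    simp [pow_add]
    ring
  have h3 := (hasSum_nat_add_iff
    (f := fun n => (if k ≤ n then u (n - k) else 0) * y ^ n) k).mp h2
  have hz : ∑ n ∈ Finset.range k, (if k ≤ n then u (n - k) else 0) * y ^ n = 0 :=
    Finset.sum_eq_zero fun n hn => by
      rw [if_neg (not_le.mpr (Finset.mem_range.mp hn)), zero_mul]
  rwa [hz, add_zero] at h3

private def psrB (a : ℕ → ℝ) : ℕ → ℝ := fun n => ((n:ℝ)+1) * a (n+1)

private def psrC (a : ℕ → ℝ) : ℕ → ℝ := fun n =>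
  (if 2 ≤ n then psrB (psrB a) (n-2) else 0) - (if 4 ≤ n then psrB (psrB a) (n-4) else 0)
  + (if 1 ≤ n then psrB a (n-1) else 0) - 2 * (if 3 ≤ n then psrB a (n-3) else 0) - a n

theorem power_series_recurrence (β : ℝ → ℝ) (a : ℕ → ℝ) (r : ℝ) (hr : 0 < r)
    (hsum : ∀ x ∈ Set.Ioo (-r) r, HasSum (fun n : ℕ => a n * x ^ n) (β x))
    (hode : ∀ x ∈ Set.Ioo (-r) r,
      x ^ 2 * (1 - x ^ 2) * deriv (deriv β) x
        + x * (1 - 2 * x ^ 2) * deriv β x - β x = 0) :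
    (∀ n : ℕ, n ≠ 1 →
      ((n : ℝ) + 1) * a n = if 2 ≤ n then ((n : ℝ) - 2) * a (n - 2) else 0) ∧
    a 0 = 0 ∧
    (∀ n : ℕ, Even n → a n = 0) := by
  set R : ENNReal := ENNReal.ofReal r with hRdef
  have hRpos : 0 < R := ENNReal.ofReal_pos.mpr hr
  have hball : ∀ y : ℝ, y ∈ Metric.eball (0:ℝ) R → y ∈ Set.Ioo (-r) r := by
    intro y hy
    rw [EMetric.mem_ball, edist_dist, hRdef, Real.dist_eq, sub_zero,
      ENNReal.ofReal_lt_ofReal_iff hr] at hy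
    exact ⟨neg_lt_of_abs_lt hy, lt_of_abs_lt hy⟩
  have h0 : HasFPowerSeriesOnBall β (ofScalars ℝ a) 0 R :=
    psr_hasSeries a β R hRpos (fun y hy => hsum y (hball y hy))
  have h1 : HasFPowerSeriesOnBall (deriv β) (ofScalars ℝ (psrB a)) 0 R :=
    psr_deriv_series a β R h0
  have h2 : HasFPowerSeriesOnBall (deriv (deriv β)) (ofScalars ℝ (psrB (psrB a))) 0 R :=
    psr_deriv_series (psrB a) (deriv β) R h1
  have hCsum : ∀ y : ℝ, y ∈ Metric.eball (0:ℝ) R →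
      HasSum (fun n => psrC a n * y ^ n) ((0 : ℝ → ℝ) y) := by
    intro y hy
    have hyIoo := hball y hy
    have S0 : HasSum (fun n => a n * y ^ n) (β y) := hsum y hyIoo
    have S1 : HasSum (fun n => psrB a n * y ^ n) (deriv β y) :=
      psr_hasSum_of _ _ _ h1 y hy
    have S2 : HasSum (fun n => psrB (psrB a) n * y ^ n) (deriv (deriv β) y) :=
      psr_hasSum_of _ _ _ h2 y hy
    have T1 := psr_shift 2 (psrB (psrB a)) y _ S2
    have T2 := psr_shift 4 (psrB (psrB a)) y _ S2
    have T3 := psr_shift 1 (psrB a) y _ S1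
    have T4 := (psr_shift 3 (psrB a) y _ S1).mul_left 2
    have comb := ((T1.sub T2).add (T3.sub T4)).sub S0
    have hzero : y ^ 2 * deriv (deriv β) y - y ^ 4 * deriv (deriv β) y
        + (y ^ 1 * deriv β y - 2 * (y ^ 3 * deriv β y)) - β y = 0 := by
      linear_combination hode y hyIoo
    rw [hzero] at comb
    have efun : (fun n => psrC a n * y ^ n)
        = fun n => (if 2 ≤ n then psrB (psrB a) (n-2) else 0) * y ^ n
          - (if 4 ≤ n then psrB (psrB a) (n-4) else 0) * y ^ n
          + ((if 1 ≤ n then psrB a (n-1) else 0) * y ^ n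
            - 2 * ((if 3 ≤ n then psrB a (n-3) else 0) * y ^ n))
          - a n * y ^ n := by
      funext n
      simp only [psrC]
      ring
    rw [show ((0 : ℝ → ℝ) y) = (0:ℝ) from rfl, efun]
    exact comb
  have hzs : HasFPowerSeriesOnBall (0 : ℝ → ℝ) (ofScalars ℝ (psrC a)) 0 R :=
    psr_hasSeries _ _ _ hRpos hCsum
  have hps0 : ofScalars ℝ (psrC a) = 0 := hzs.hasFPowerSeriesAt.eq_zero
  have hC0 : ∀ n, psrC a n = 0 := by
    intro n
    have happ : (ofScalars ℝ (psrC a)) n (fun _ => (1:ℝ)) = 0 := by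
      rw [hps0]; rfl
    rwa [ofScalars_apply_eq, one_pow, smul_eq_mul, mul_one] at happ
  have hrec : ∀ n : ℕ, n ≠ 1 →
      ((n : ℝ) + 1) * a n = if 2 ≤ n then ((n : ℝ) - 2) * a (n - 2) else 0 := by
    intro n hn
    have hCn := hC0 n
    match n, hn with
    | 0, _ =>
      simp [psrC] at hCn
      norm_num [hCn]
    | 2, _ =>
      simp [psrC, psrB] at hCn
      norm_num
      linarith
    | 3, _ =>
      simp [psrC, psrB] at hCn
      norm_num
      linarith
    | (m+4), _ =>
      simp only [psrC, psrB] at hCn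
      rw [if_pos (by omega), if_pos (by omega), if_pos (by omega), if_pos (by omega)] at hCn
      have e1 : m + 4 - 2 = m + 2 := by omega
      have e2 : m + 4 - 4 = m := by omega
      have e3 : m + 4 - 1 = m + 3 := by omega
      have e4 : m + 4 - 3 = m + 1 := by omega
      rw [e1, e2, e3, e4] at hCn
      push_cast at hCn
      rw [if_pos (by omega)]
      have e5 : m + 4 - 2 = m + 2 := by omega
      rw [e5]
      push_cast
      have key : ((m:ℝ) + 3) * ((((m:ℝ)+4) + 1) * a (m+4) - (((m:ℝ)+4) - 2) * a (m+2)) = 0 := by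
        linear_combination hCn
      rcases mul_eq_zero.mp key with h' | h'
      · exfalso; have : (0:ℝ) < (m:ℝ) + 3 := by positivity
        linarith
      · linarith
  have ha0 : a 0 = 0 := by
    have h := hrec 0 (by norm_num)
    norm_num at h
    exact h
  refine ⟨hrec, ha0, ?_⟩
  have heven : ∀ k : ℕ, a (2*k) = 0 := by
    intro k
    induction k with
    | zero => simpa using ha0
    | succ k ih =>
      have h := hrec (2*k+2) (by omega)
      rw [if_pos (by omega)] at h
      have e : 2*k+2-2 = 2*k := by omega
      rw [e, ih, mul_zero] at h
      have e2 : 2*(k+1) = 2*k+2 := by ring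
      rw [e2]
      rcases mul_eq_zero.mp h with h' | h'
      · exfalso
        have : (0:ℝ) < ((2*k+2:ℕ):ℝ) + 1 := by positivity
        linarith
      · exact h'
  intro n hn
  obtain ⟨k, hk⟩ := hn
  rw [show n = 2*k by omega]
  exact heven k
end

section
/- Taylor coefficients of the explicit solution: the function β(x) = 2x/(1 + √(1 − x²)) is analytic at 0, and its Maclaurin coefficients aₙ (so that β(x) = Σ_{n=0}^{∞} aₙ·xⁿ near 0) satisfy aₙ = 0 for all even n, a₁ = 1, and aₙ = ((n − 2)/(n + 1))·a_{n−2} for all odd n ≥ 3. -/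
open Real Set Filter

open Finset
private noncomputable def ccat (k : ℕ) : ℝ := (catalan k : ℝ) / 4 ^ k

private noncomputable def acoef (n : ℕ) : ℝ := if n % 2 = 1 then ccat (n / 2) else 0

private theorem catalan_le_four_pow (k : ℕ) : (catalan k : ℝ) ≤ 4 ^ k := by
  have h1 : catalan k ≤ Nat.centralBinom k := by
    rw [catalan_eq_centralBinom_div]; exact Nat.div_le_self _ _
  have h2 : Nat.centralBinom k ≤ 4 ^ k := by
    have hmem : k ∈ range (2 * k + 1) := Finset.mem_range.mpr (by omega)
    calc Nat.centralBinom k ≤ ∑ m ∈ range (2 * k + 1), (2 * k).choose m :=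
          Finset.single_le_sum (f := fun m => (2 * k).choose m)
            (fun i _ => Nat.zero_le _) hmem
      _ = 2 ^ (2 * k) := Nat.sum_range_choose (2 * k)
      _ = 4 ^ k := by rw [pow_mul]; norm_num
  exact_mod_cast le_trans h1 h2

private theorem ccat_nonneg (k : ℕ) : 0 ≤ ccat k := by rw [ccat]; positivity

private theorem ccat_le_one (k : ℕ) : ccat k ≤ 1 := by
  rw [ccat]
  exact div_le_one_of_le₀ (catalan_le_four_pow k) (by positivity)

private theorem acoef_abs_le_one (n : ℕ) : |acoef n| ≤ 1 := by
  rw [acoef]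
  split
  · rw [abs_of_nonneg (ccat_nonneg _)]; exact ccat_le_one _
  · simp

private theorem catalan_rec (k : ℕ) :
    (k + 2) * catalan (k + 1) = 2 * (2 * k + 1) * catalan k := by
  have h1 := Nat.succ_mul_centralBinom_succ k
  have h2 := succ_mul_catalan_eq_centralBinom k
  have h3 := succ_mul_catalan_eq_centralBinom (k + 1)
  have hD : Nat.centralBinom (k + 1) = 2 * (2 * k + 1) * catalan k := by
    refine Nat.eq_of_mul_eq_mul_left (Nat.succ_pos k) ?_
    calc (k + 1) * Nat.centralBinom (k + 1) = 2 * (2 * k + 1) * Nat.centralBinom k := h1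
      _ = 2 * (2 * k + 1) * ((k + 1) * catalan k) := by rw [h2]
      _ = (k + 1) * (2 * (2 * k + 1) * catalan k) := by ring
  calc (k + 2) * catalan (k + 1) = Nat.centralBinom (k + 1) := h3
    _ = 2 * (2 * k + 1) * catalan k := hD

private theorem key (x : ℝ) (hx : |x| < 1 / 2) :
    HasSum (fun k : ℕ => (catalan k : ℝ) / 4 ^ k * x ^ (2 * k + 1))
      (2 * x / (1 + Real.sqrt (1 - x ^ 2))) := by
  have hx2 : x ^ 2 < 1 / 4 := by
    have := abs_nonneg x
    nlinarith [sq_abs x]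
  set u : ℝ := x ^ 2 / 4 with hu_def
  have hu0 : 0 ≤ u := by positivity
  have hu : 4 * u < 1 / 4 := by rw [hu_def]; nlinarith
  have hu1 : 4 * u < 1 := by linarith
  -- summability
  have hbound : ∀ k : ℕ, ‖(catalan k : ℝ) * u ^ k‖ ≤ (4 * u) ^ k := by
    intro k
    rw [norm_mul, norm_pow, Real.norm_eq_abs, Real.norm_eq_abs, abs_of_nonneg hu0,
      Nat.abs_cast, mul_pow]
    exact mul_le_mul_of_nonneg_right (catalan_le_four_pow k) (by positivity)
  have hgeo : Summable fun k : ℕ => (4 * u) ^ k :=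
    summable_geometric_of_lt_one (by positivity) hu1
  have hnorm : Summable fun k : ℕ => ‖(catalan k : ℝ) * u ^ k‖ :=
    Summable.of_nonneg_of_le (fun _ => norm_nonneg _) hbound hgeo
  have hsum : Summable fun k : ℕ => (catalan k : ℝ) * u ^ k := hnorm.of_norm
  set S : ℝ := ∑' k : ℕ, (catalan k : ℝ) * u ^ k with hS_def
  have hS : HasSum (fun k : ℕ => (catalan k : ℝ) * u ^ k) S := hsum.hasSum
  -- bound on S
  have hSb : |S| ≤ 4 / 3 := by
    have h1 : |S| ≤ ∑' k : ℕ, ‖(catalan k : ℝ) * u ^ k‖ := norm_tsum_le_tsum_norm hnorm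
    have h2 : (∑' k : ℕ, ‖(catalan k : ℝ) * u ^ k‖) ≤ ∑' k : ℕ, (4 * u) ^ k :=
      Summable.tsum_le_tsum hbound hnorm hgeo
    have h3 : (∑' k : ℕ, (4 * u) ^ k) = (1 - 4 * u)⁻¹ :=
      tsum_geometric_of_lt_one (by positivity) hu1
    have h4 : (1 - 4 * u)⁻¹ ≤ 4 / 3 := by
      rw [inv_le_comm₀ (by linarith) (by norm_num)]
      linarith
    linarith
  -- Cauchy product
  have hcauchy : S * S = ∑' n : ℕ, (catalan (n + 1) : ℝ) * u ^ n := by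
    rw [hS_def, tsum_mul_tsum_eq_tsum_sum_antidiagonal_of_summable_norm hnorm hnorm]
    refine tsum_congr fun n => ?_
    rw [catalan_succ']
    push_cast
    rw [Finset.sum_mul]
    refine Finset.sum_congr rfl fun kl hkl => ?_
    rw [Finset.HasAntidiagonal.mem_antidiagonal] at hkl
    rw [← hkl, pow_add]
    ring
  have hshift : HasSum (fun n : ℕ => (catalan (n + 1) : ℝ) * u ^ (n + 1)) (S - 1) := by
    have := (hasSum_nat_add_iff' (f := fun k : ℕ => (catalan k : ℝ) * u ^ k) (g := S) 1).mpr hS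
    simpa using this
  have hq : u * S ^ 2 = S - 1 := by
    have h5 : u * (S * S) = ∑' n : ℕ, (catalan (n + 1) : ℝ) * u ^ (n + 1) := by
      rw [hcauchy, ← tsum_mul_left]
      exact tsum_congr fun n => by ring
    rw [hshift.tsum_eq] at h5
    linear_combination h5
  -- the sqrt root
  have hx1 : x ^ 2 ≤ 1 := by linarith
  set s : ℝ := Real.sqrt (1 - x ^ 2) with hs_def
  have hs0 : 0 ≤ s := Real.sqrt_nonneg _
  have hs2 : s ^ 2 = 1 - x ^ 2 := Real.sq_sqrt (by linarith)
  have hs1 : (0:ℝ) < 1 + s := by linarith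
  set β : ℝ := 2 * x / (1 + s) with hβ_def
  have hβs : β * (1 + s) = 2 * x := by
    rw [hβ_def]; field_simp
  have hβq : x * β ^ 2 - 4 * β + 4 * x = 0 := by
    have hne : (1 + s) ^ 2 ≠ 0 := by positivity
    have h0 : (1 + s) ^ 2 * (x * β ^ 2 - 4 * β + 4 * x) = 0 := by
      linear_combination (x * β * (1 + s) + 2 * x ^ 2 - 4 * (1 + s)) * hβs + 4 * x * hs2
    exact (mul_eq_zero.mp h0).resolve_left hne
  have hTq : x * (x * S) ^ 2 - 4 * (x * S) + 4 * x = 0 := by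
    have hq' : x ^ 2 / 4 * S ^ 2 = S - 1 := hq
    linear_combination 4 * x * hq'
  have hfac : (x * S - β) * (x * (x * S + β) - 4) = 0 := by
    linear_combination hTq - hβq
  have hβb : |β| ≤ 1 := by
    rw [hβ_def, abs_div, abs_of_pos hs1]
    rw [div_le_one hs1]
    have : |2 * x| = 2 * |x| := by rw [abs_mul]; norm_num
    rw [this]
    linarith
  have hsmall : x * (x * S + β) - 4 ≠ 0 := by
    have hxa : 0 ≤ |x| := abs_nonneg x
    have hSa : 0 ≤ |S| := abs_nonneg S
    have h1 : |x * (x * S + β)| ≤ |x| * (|x| * |S| + |β|) := by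
      rw [abs_mul]
      refine mul_le_mul_of_nonneg_left ?_ (abs_nonneg _)
      calc |x * S + β| ≤ |x * S| + |β| := abs_add_le _ _
        _ = |x| * |S| + |β| := by rw [abs_mul]
    have hxs : |x| * |S| ≤ (1 / 2) * (4 / 3) := by nlinarith
    have h2 : |x| * (|x| * |S| + |β|) < 4 := by nlinarith
    intro h
    have h4 : x * (x * S + β) = 4 := by linarith
    rw [h4] at h1
    norm_num at h1
    linarith
  have hTβ : x * S = β := by
    rcases mul_eq_zero.mp hfac with h | h
    · linarith
    · exact absurd h hsmall
  -- conclude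
  have heq : (fun k : ℕ => (catalan k : ℝ) / 4 ^ k * x ^ (2 * k + 1)) =
      fun k : ℕ => x * ((catalan k : ℝ) * u ^ k) := by
    funext k
    rw [hu_def, div_pow, pow_add, pow_mul]
    ring
  rw [heq, ← hTβ]
  exact hS.mul_left x

private theorem akey (x : ℝ) (hx : |x| < 1 / 2) :
    HasSum (fun n : ℕ => acoef n * x ^ n) (2 * x / (1 + Real.sqrt (1 - x ^ 2))) := by
  have hinj : Function.Injective (fun k : ℕ => 2 * k + 1) := fun a b h => by simp only at h; omega
  rw [← Function.Injective.hasSum_iff hinj ?_]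
  · have hcomp : ((fun n : ℕ => acoef n * x ^ n) ∘ fun k : ℕ => 2 * k + 1) =
        fun k : ℕ => (catalan k : ℝ) / 4 ^ k * x ^ (2 * k + 1) := by
      funext k
      have h1 : (2 * k + 1) % 2 = 1 := by omega
      have h2 : (2 * k + 1) / 2 = k := by omega
      simp only [Function.comp_apply, acoef, h1, h2, if_true, ccat]
    rw [hcomp]
    exact key x hx
  · intro n hn
    have h1 : n % 2 ≠ 1 := by
      intro h
      exact hn ⟨n / 2, by show 2 * (n / 2) + 1 = n; omega⟩
    simp [acoef, h1]

theorem maclaurin_coefficients_of_explicit_beta :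
    AnalyticAt ℝ (fun x : ℝ => 2 * x / (1 + Real.sqrt (1 - x ^ 2))) 0 ∧
    ∃ (a : ℕ → ℝ) (r : ℝ), 0 < r ∧
      (∀ x : ℝ, |x| < r →
        HasSum (fun n : ℕ => a n * x ^ n) (2 * x / (1 + Real.sqrt (1 - x ^ 2)))) ∧
      (∀ n : ℕ, Even n → a n = 0) ∧
      a 1 = 1 ∧
      (∀ n : ℕ, Odd n → 3 ≤ n →
        a n = (((n : ℝ) - 2) / ((n : ℝ) + 1)) * a (n - 2)) := by
  constructor
  · set p := FormalMultilinearSeries.ofScalars ℝ acoef with hp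
    have hball : HasFPowerSeriesOnBall (fun x : ℝ => 2 * x / (1 + Real.sqrt (1 - x ^ 2))) p 0
        ((1 / 2 : NNReal) : ENNReal) := by
      refine ⟨?_, by norm_num, ?_⟩
      · refine FormalMultilinearSeries.le_radius_of_bound p 1 fun n => ?_
        rw [hp, FormalMultilinearSeries.ofScalars_norm]
        have h1 : ‖acoef n‖ ≤ 1 := acoef_abs_le_one n
        have h2 : ((1 / 2 : NNReal) : ℝ) ^ n ≤ 1 := by
          apply pow_le_one₀ <;> norm_num
        nlinarith [norm_nonneg (acoef n),
          pow_nonneg (by norm_num : (0:ℝ) ≤ ((1 / 2 : NNReal) : ℝ)) n]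
      · intro y hy
        have hy' : |y| < 1 / 2 := by
          rw [EMetric.mem_ball, edist_zero_right] at hy
          have h1 : ‖y‖₊ < (1 / 2 : NNReal) := ENNReal.coe_lt_coe.mp hy
          have h2 : ‖y‖ < ((1 / 2 : NNReal) : ℝ) := h1
          simpa using h2
        simp only [hp, FormalMultilinearSeries.ofScalars_apply_eq, smul_eq_mul, zero_add]
        exact akey y hy'
    exact hball.hasFPowerSeriesAt.analyticAt
  · refine ⟨acoef, 1 / 2, by norm_num, fun x hx => akey x hx, ?_, ?_, ?_⟩
    · intro n hn
      rw [Nat.even_iff] at hn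
      simp [acoef, hn]
    · norm_num [acoef, ccat]
    · intro n hodd h3
      rw [Nat.odd_iff] at hodd
      obtain ⟨k, rfl⟩ : ∃ k, n = 2 * k + 3 := ⟨(n - 3) / 2, by omega⟩
      have e1 : (2 * k + 3) % 2 = 1 := by omega
      have e2 : (2 * k + 3) / 2 = k + 1 := by omega
      have e3 : 2 * k + 3 - 2 = 2 * k + 1 := by omega
      have e4 : (2 * k + 1) % 2 = 1 := by omega
      have e5 : (2 * k + 1) / 2 = k := by omega
      rw [e3]
      simp only [acoef, e1, e2, e4, e5, if_true, ccat]
      have hc : ((k : ℝ) + 2) * (catalan (k + 1) : ℝ) = 2 * (2 * (k : ℝ) + 1) * (catalan k : ℝ) := by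
        exact_mod_cast catalan_rec k
      have h4 : (4 : ℝ) ^ k ≠ 0 := by positivity
      push_cast
      field_simp
      ring_nf
      ring_nf at hc
      nlinarith [hc, pow_pos (by norm_num : (0:ℝ) < 4) k]
end
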